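/- Let f be adaptive monotone and adaptive submodular, π any deterministic adaptive policy, and π* any deterministic policy selecting at most r items. Then for any 0 ≤ i ≤ r, f_avg(π*) − f_avg(π_i) ≤ r · E_Φ[max_e Δ(e | Ψ_i(π, Φ))]. -/

import Mathlib

open Finset
open scoped Classical

section Adaptive

variable {E O : Type*} [Fintype E] [Fintype O] [DecidableEq E] [Nonempty E]

/-- A partial realization: a partial assignment of states to items. -/
abbrev PReal (E O : Type*) := E → Option O

/-- A (full) realization `φ` is consistent with a partial realization `ψ`
(written `φ ∼ ψ`) if `φ` agrees with `ψ` on the domain of `ψ`. -/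
def consistentR (φ : E → O) (ψ : PReal E O) : Prop := ∀ e o, ψ e = some o → φ e = o

/-- The domain of a partial realization, i.e. the set of items already selected. -/
noncomputable def pdom (ψ : PReal E O) : Finset E :=
  Finset.univ.filter fun e => (ψ e).isSome

/-- The probability `Pr[Φ ∼ ψ]` that the random realization is consistent with `ψ`. -/
noncomputable def prMass (p : (E → O) → ℝ) (ψ : PReal E O) : ℝ :=
  ∑ φ ∈ Finset.univ.filter (fun φ => consistentR φ ψ), p φ

/-- The conditional expected marginal benefit `Δ(e | ψ)` of item `e` given the
partial realization `ψ`. -/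
noncomputable def marginal (p : (E → O) → ℝ) (f : Finset E → (E → O) → ℝ)
    (e : E) (ψ : PReal E O) : ℝ :=
  (∑ φ ∈ Finset.univ.filter (fun φ => consistentR φ ψ),
      p φ * (f (insert e (pdom ψ)) φ - f (pdom ψ) φ)) / prMass p ψ

/-- `max_e Δ(e | ψ)`, the best single-item conditional marginal benefit. -/
noncomputable def maxMarginal (p : (E → O) → ℝ) (f : Finset E → (E → O) → ℝ)
    (ψ : PReal E O) : ℝ :=
  Finset.univ.sup' Finset.univ_nonempty (fun e => marginal p f e ψ)

/-- Adaptive monotonicity: `Δ(e | ψ) ≥ 0` for every `e` and every `ψ` with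
`Pr[Φ ∼ ψ] > 0`. -/
def AdaptiveMonotone (p : (E → O) → ℝ) (f : Finset E → (E → O) → ℝ) : Prop :=
  ∀ ψ : PReal E O, 0 < prMass p ψ → ∀ e : E, 0 ≤ marginal p f e ψ

/-- `ψ` is a subrealization of `ψ'`. -/
def subreal (ψ ψ' : PReal E O) : Prop := ∀ e o, ψ e = some o → ψ' e = some o

/-- Adaptive submodularity: `Δ(e | ψ) ≥ Δ(e | ψ')` whenever `ψ ⊆ ψ'` and
`e ∉ dom(ψ')`. -/
def AdaptiveSubmodular (p : (E → O) → ℝ) (f : Finset E → (E → O) → ℝ) : Prop :=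
  ∀ ψ ψ' : PReal E O, subreal ψ ψ' → ∀ e ∉ pdom ψ', marginal p f e ψ' ≤ marginal p f e ψ

/-- A deterministic adaptive policy: picks the next item from the current
partial realization. -/
abbrev Policy (E O : Type*) := PReal E O → E

/-- `runP π φ i = Ψ_i(π, φ)`: the partial realization observed after policy `π`
selects its first `i` items under realization `φ`. -/
noncomputable def runP (π : Policy E O) (φ : E → O) : ℕ → PReal E O
  | 0 => fun _ => none
  | (i + 1) =>
      Function.update (runP π φ i) (π (runP π φ i)) (some (φ (π (runP π φ i))))

/-- `favg p f π i = f_avg(π_i)`: the expected utility of the truncated policy `π_i`. -/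
noncomputable def favg (p : (E → O) → ℝ) (f : Finset E → (E → O) → ℝ)
    (π : Policy E O) (i : ℕ) : ℝ :=
  ∑ φ : E → O, p φ * f (pdom (runP π φ i)) φ

end Adaptive

/-!
Run `π*` for `r` steps and `π` for `i` steps on the same realization, the second run ignoring
the feedback of the first; the union of the two observations is again something a
deterministic procedure observes, so conditional expectations given it behave like a tower
property. By adaptive monotonicity each item `π` adds to `π*_r` has nonnegative expected gain, so
`f_avg(π*_r) ≤ f_avg(π*_r ⊕ π_i)`. The union is symmetric, and by adaptive submodularity each of
the at most `r` items `π*` adds to `π_i` gains in expectation at most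
`E[max_e Δ(e | Ψ_i(π, Φ))]`, so `f_avg(π_i ⊕ π*_r) ≤ f_avg(π_i) + r · E[max_e Δ(e | Ψ_i(π, Φ))]`.
-/

section Realizations

variable {E O : Type*}

lemma consistentR_of_subreal {φ : E → O} {ψ ψ' : PReal E O} (h : subreal ψ ψ')
    (hφ : consistentR φ ψ') : consistentR φ ψ :=
  fun e o he => hφ e o (h e o he)

/-- The observation of `π₁ ⊕ π₂`; the bias to the left is harmless, since two runs under the
same realization agree wherever both are defined. -/
def merge (ψ₁ ψ₂ : PReal E O) : PReal E O := fun e => (ψ₁ e).or (ψ₂ e)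

lemma subreal_merge_left (ψ₁ ψ₂ : PReal E O) : subreal ψ₁ (merge ψ₁ ψ₂) :=
  fun e o h => by simp [merge, h]

lemma consistentR_merge_iff {φ φ' : E → O} {ψ₁ ψ₂ : PReal E O} (h₁ : consistentR φ ψ₁)
    (h₂ : consistentR φ ψ₂) :
    consistentR φ' (merge ψ₁ ψ₂) ↔ consistentR φ' ψ₁ ∧ consistentR φ' ψ₂ := by
  refine ⟨fun h => ⟨fun e o he => h e o (subreal_merge_left ψ₁ ψ₂ e o he), fun e o he => ?_⟩,
    fun ⟨h₁', h₂'⟩ e o he => ?_⟩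
  · cases hc : ψ₁ e with
    | none => exact h e o (by simp [merge, hc, he])
    | some o' =>
      obtain rfl : o' = o := (h₁ e o' hc).symm.trans (h₂ e o he)
      exact h e o' (by simp [merge, hc])
  · cases hc : ψ₁ e with
    | none => exact h₂' e o (by simpa [merge, hc] using he)
    | some o' => exact h₁' e o (by simpa [merge, hc] using he)

variable [DecidableEq E]

lemma consistentR_update {φ : E → O} {ψ : PReal E O} (h : consistentR φ ψ) (a : E) :
    consistentR φ (Function.update ψ a (some (φ a))) := by
  intro e o he
  rw [Function.update_apply] at he
  split_ifs at he with hea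
  · cases he
    rw [hea]
  · exact h e o he

lemma subreal_update {φ : E → O} {ψ : PReal E O} (h : consistentR φ ψ) (a : E) :
    subreal ψ (Function.update ψ a (some (φ a))) := by
  intro e o he
  rw [Function.update_apply]
  split_ifs with hea
  · rw [← h e o he, hea]
  · exact he

end Realizations

section Domain

variable {E O : Type*} [Fintype E]

lemma mem_pdom {ψ : PReal E O} {e : E} : e ∈ pdom ψ ↔ (ψ e).isSome := by
  simp [pdom]

variable [DecidableEq E]

lemma pdom_merge (ψ₁ ψ₂ : PReal E O) : pdom (merge ψ₁ ψ₂) = pdom ψ₁ ∪ pdom ψ₂ := by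
  ext e
  simp [mem_pdom, merge]

lemma pdom_update_some (ψ : PReal E O) (a : E) (o : O) :
    pdom (Function.update ψ a (some o)) = insert a (pdom ψ) := by
  ext e
  by_cases h : e = a <;> simp [mem_pdom, h]

end Domain

section Runs

variable {E O : Type*} [DecidableEq E] (π : Policy E O) (φ : E → O)

lemma consistentR_runP (k : ℕ) : consistentR φ (runP π φ k) := by
  induction k with
  | zero => exact fun e o h => (Option.some_ne_none o h.symm).elim
  | succ k ih => exact consistentR_update ih _

lemma subreal_runP_succ (k : ℕ) : subreal (runP π φ k) (runP π φ (k + 1)) :=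
  subreal_update (consistentR_runP π φ k) _

/-- A deterministic policy's choices depend only on what it has observed, so the realizations
consistent with its observation are exactly those producing the same observation. -/
theorem consistentR_runP_iff {φ' : E → O} {k : ℕ} :
    consistentR φ' (runP π φ k) ↔ runP π φ' k = runP π φ k := by
  refine ⟨fun h => ?_, fun h => h ▸ consistentR_runP π φ' k⟩
  induction k with
  | zero => rfl
  | succ k ih =>
    have hk := ih (consistentR_of_subreal (subreal_runP_succ π φ k) h)
    have ha : φ' (π (runP π φ k)) = φ (π (runP π φ k)) := h _ _ (by simp [runP])
    rw [runP, runP, hk, ha]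

theorem consistentR_merge_runP_iff (π' : Policy E O) {φ' : E → O} {k k' : ℕ} :
    consistentR φ' (merge (runP π φ k) (runP π' φ k')) ↔
      runP π φ' k = runP π φ k ∧ runP π' φ' k' = runP π' φ k' := by
  rw [consistentR_merge_iff (consistentR_runP π φ k) (consistentR_runP π' φ k'),
    consistentR_runP_iff, consistentR_runP_iff]

variable [Fintype E]

lemma pdom_runP_zero : pdom (runP π φ 0) = ∅ := by
  ext
  simp [mem_pdom, runP]

lemma pdom_runP_succ (k : ℕ) :
    pdom (runP π φ (k + 1)) = insert (π (runP π φ k)) (pdom (runP π φ k)) :=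
  pdom_update_some _ _ _

end Runs

/-- What makes conditioning on `Ψ φ` obey the tower property. -/
def IsObservationMap {E O : Type*} (Ψ : (E → O) → PReal E O) : Prop :=
  ∀ φ φ', consistentR φ' (Ψ φ) ↔ Ψ φ' = Ψ φ

theorem isObservationMap_merge_runP {E O : Type*} [DecidableEq E] (π π' : Policy E O)
    (k k' : ℕ) : IsObservationMap fun φ => merge (runP π φ k) (runP π' φ k') := by
  intro φ φ'
  dsimp only
  rw [consistentR_merge_runP_iff]
  refine ⟨fun ⟨h, h'⟩ => by rw [h, h'], fun h => ?_⟩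
  rw [← consistentR_merge_runP_iff, ← h]
  exact (consistentR_merge_runP_iff π φ' π').2 ⟨rfl, rfl⟩

section Expectation

variable {E O : Type*} [Fintype E] [Fintype O] [DecidableEq E] {p : (E → O) → ℝ}

/-- `E[g(Φ) | Φ ∼ ψ]`, with junk value `0` when `Pr[Φ ∼ ψ] = 0`. -/
noncomputable def condMean (p : (E → O) → ℝ) (g : (E → O) → ℝ) (ψ : PReal E O) : ℝ :=
  (∑ φ ∈ univ.filter (fun φ => consistentR φ ψ), p φ * g φ) / prMass p ψ

lemma le_prMass_of_consistentR (hp : ∀ φ, 0 ≤ p φ) {φ : E → O} {ψ : PReal E O}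
    (h : consistentR φ ψ) : p φ ≤ prMass p ψ :=
  single_le_sum (fun φ' _ => hp φ') (by simpa using h)

theorem IsObservationMap.sum_mul_eq_sum_mul_condMean {Ψ : (E → O) → PReal E O}
    (hΨ : IsObservationMap Ψ) (hp : ∀ φ, 0 ≤ p φ) (H : (E → O) → (E → O) → ℝ)
    (hH : ∀ φ φ', Ψ φ' = Ψ φ → H φ' = H φ) :
    ∑ φ, p φ * H φ φ = ∑ φ, p φ * condMean p (H φ) (Ψ φ) := by
  -- each nonempty fibre `Ψ ⁻¹' {Ψ φ₀}` is the event `Φ ∼ Ψ φ₀`, on which `H` is constant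
  rw [← sum_fiberwise univ Ψ, ← sum_fiberwise univ Ψ]
  refine sum_congr rfl fun ψ _ => ?_
  rcases (univ.filter fun φ => Ψ φ = ψ).eq_empty_or_nonempty with hempty | ⟨φ₀, hφ₀⟩
  · simp [hempty]
  obtain rfl := (mem_filter.1 hφ₀).2
  have hfiber : univ.filter (fun φ => Ψ φ = Ψ φ₀) =
      univ.filter (fun φ => consistentR φ (Ψ φ₀)) := by
    ext φ
    simpa using (hΨ φ₀ φ).symm
  have hΨφ : ∀ φ ∈ univ.filter (fun φ => consistentR φ (Ψ φ₀)), Ψ φ = Ψ φ₀ :=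
    fun φ hφ => (hΨ φ₀ φ).1 (mem_filter.1 hφ).2
  set X := ∑ φ ∈ univ.filter (fun φ => consistentR φ (Ψ φ₀)), p φ * H φ₀ φ
  calc ∑ φ ∈ univ.filter (fun φ => Ψ φ = Ψ φ₀), p φ * H φ φ = X :=
        sum_congr hfiber fun φ hφ => by rw [hH φ₀ φ (hΨφ φ hφ)]
    _ = prMass p (Ψ φ₀) * (X / prMass p (Ψ φ₀)) := by
        by_cases hm : prMass p (Ψ φ₀) = 0
        · have hp0 := (sum_eq_zero_iff_of_nonneg fun φ _ => hp φ).1 hm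
          rw [hm, zero_mul]
          exact sum_eq_zero fun φ hφ => by rw [hp0 φ hφ, zero_mul]
        · rw [mul_div_cancel₀ _ hm]
    _ = _ := by
        rw [prMass, sum_mul, hfiber]
        refine sum_congr rfl fun φ hφ => ?_
        rw [hΨφ φ hφ, hH φ₀ φ (hΨφ φ hφ)]
        rfl

variable {f : Finset E → (E → O) → ℝ}

theorem IsObservationMap.sum_mul_sub_eq_sum_mul_marginal {Ψ : (E → O) → PReal E O}
    (hΨ : IsObservationMap Ψ) (hp : ∀ φ, 0 ≤ p φ) (e : (E → O) → E)
    (he : ∀ φ φ', Ψ φ' = Ψ φ → e φ' = e φ) :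
    ∑ φ, p φ * (f (insert (e φ) (pdom (Ψ φ))) φ - f (pdom (Ψ φ)) φ) =
      ∑ φ, p φ * marginal p f (e φ) (Ψ φ) :=
  hΨ.sum_mul_eq_sum_mul_condMean hp
    (fun φ φ' => f (insert (e φ) (pdom (Ψ φ))) φ' - f (pdom (Ψ φ)) φ')
    fun φ φ' h => by simp only [h, he φ φ' h]

lemma marginal_nonneg (hp : ∀ φ, 0 ≤ p φ) (hmono : AdaptiveMonotone p f) (e : E)
    (ψ : PReal E O) : 0 ≤ marginal p f e ψ := by
  by_cases h : prMass p ψ = 0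
  · rw [marginal, h, div_zero]
  · exact hmono ψ ((sum_nonneg fun φ _ => hp φ).lt_of_ne' h) e

lemma marginal_eq_zero_of_mem_pdom {e : E} {ψ : PReal E O} (he : e ∈ pdom ψ) :
    marginal p f e ψ = 0 := by
  simp [marginal, insert_eq_of_mem he]

variable [Nonempty E]

lemma marginal_le_maxMarginal (e : E) (ψ : PReal E O) : marginal p f e ψ ≤ maxMarginal p f ψ :=
  le_sup' (fun e => marginal p f e ψ) (mem_univ e)

lemma marginal_le_maxMarginal_of_subreal (hmono : AdaptiveMonotone p f)
    (hsub : AdaptiveSubmodular p f) {ρ ψ : PReal E O} (hρψ : subreal ρ ψ)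
    (hρ : 0 < prMass p ρ) (e : E) : marginal p f e ψ ≤ maxMarginal p f ρ := by
  by_cases he : e ∈ pdom ψ
  · rw [marginal_eq_zero_of_mem_pdom he]
    exact (hmono ρ hρ e).trans (marginal_le_maxMarginal e ρ)
  · exact (hsub ρ ψ hρψ e he).trans (marginal_le_maxMarginal e ρ)

end Expectation

section Concatenation

variable {E O : Type*} [Fintype E] [Fintype O] [DecidableEq E]
  {p : (E → O) → ℝ} {f : Finset E → (E → O) → ℝ} (π₁ π₂ : Policy E O) (k₁ : ℕ)

/-- `f_avg(π₁_{k₁} ⊕ π₂_{k₂})`, where `π₂` is run from scratch ignoring the feedback of `π₁`,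
so that the selected items are those of both runs. -/
noncomputable def favgConcat (p : (E → O) → ℝ) (f : Finset E → (E → O) → ℝ)
    (π₁ : Policy E O) (k₁ : ℕ) (π₂ : Policy E O) (k₂ : ℕ) : ℝ :=
  ∑ φ : E → O, p φ * f (pdom (runP π₁ φ k₁) ∪ pdom (runP π₂ φ k₂)) φ

lemma favgConcat_comm (k₂ : ℕ) :
    favgConcat p f π₁ k₁ π₂ k₂ = favgConcat p f π₂ k₂ π₁ k₁ := by
  simp only [favgConcat, union_comm]

lemma favgConcat_zero_right : favgConcat p f π₁ k₁ π₂ 0 = favg p f π₁ k₁ := by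
  simp [favgConcat, favg, pdom_runP_zero]

theorem favgConcat_succ_sub (hp : ∀ φ, 0 ≤ p φ) (k : ℕ) :
    favgConcat p f π₁ k₁ π₂ (k + 1) - favgConcat p f π₁ k₁ π₂ k =
      ∑ φ, p φ * marginal p f (π₂ (runP π₂ φ k)) (merge (runP π₁ φ k₁) (runP π₂ φ k)) := by
  have hΨ := isObservationMap_merge_runP π₁ π₂ k₁ k
  rw [← hΨ.sum_mul_sub_eq_sum_mul_marginal hp _ fun φ φ' h =>
      congrArg π₂ ((consistentR_merge_runP_iff π₁ φ π₂).1 ((hΨ φ φ').2 h)).2,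
    favgConcat, favgConcat, ← sum_sub_distrib]
  refine sum_congr rfl fun φ _ => ?_
  rw [pdom_merge, pdom_runP_succ, union_insert, mul_sub]

theorem favgConcat_le_succ (hp : ∀ φ, 0 ≤ p φ) (hmono : AdaptiveMonotone p f) (k : ℕ) :
    favgConcat p f π₁ k₁ π₂ k ≤ favgConcat p f π₁ k₁ π₂ (k + 1) := by
  rw [← sub_nonneg, favgConcat_succ_sub π₁ π₂ k₁ hp]
  exact sum_nonneg fun φ _ => mul_nonneg (hp φ) (marginal_nonneg hp hmono _ _)

theorem favg_le_favgConcat (hp : ∀ φ, 0 ≤ p φ) (hmono : AdaptiveMonotone p f) (k₂ : ℕ) :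
    favg p f π₁ k₁ ≤ favgConcat p f π₁ k₁ π₂ k₂ := by
  induction k₂ with
  | zero => exact (favgConcat_zero_right π₁ π₂ k₁).ge
  | succ k ih => exact ih.trans (favgConcat_le_succ π₁ π₂ k₁ hp hmono k)

variable [Nonempty E]

theorem favgConcat_succ_le (hp : ∀ φ, 0 ≤ p φ) (hmono : AdaptiveMonotone p f)
    (hsub : AdaptiveSubmodular p f) (k : ℕ) :
    favgConcat p f π₁ k₁ π₂ (k + 1) ≤
      favgConcat p f π₁ k₁ π₂ k + ∑ φ, p φ * maxMarginal p f (runP π₁ φ k₁) := by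
  rw [← sub_le_iff_le_add', favgConcat_succ_sub π₁ π₂ k₁ hp]
  refine sum_le_sum fun φ _ => ?_
  rcases (hp φ).eq_or_lt with h0 | h0
  · rw [← h0, zero_mul, zero_mul]
  · refine mul_le_mul_of_nonneg_left ?_ h0.le
    exact marginal_le_maxMarginal_of_subreal hmono hsub (subreal_merge_left _ _)
      (h0.trans_le (le_prMass_of_consistentR hp (consistentR_runP π₁ φ k₁))) _

theorem favgConcat_le (hp : ∀ φ, 0 ≤ p φ) (hmono : AdaptiveMonotone p f)
    (hsub : AdaptiveSubmodular p f) (k₂ : ℕ) :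
    favgConcat p f π₁ k₁ π₂ k₂ ≤
      favg p f π₁ k₁ + k₂ * ∑ φ, p φ * maxMarginal p f (runP π₁ φ k₁) := by
  induction k₂ with
  | zero => simp [favgConcat_zero_right]
  | succ k ih =>
    push_cast
    linarith [favgConcat_succ_le π₁ π₂ k₁ hp hmono hsub k]

end Concatenation

theorem opt_minus_favg_le_general {E O : Type*} [Fintype E] [Fintype O] [DecidableEq E]
    [Nonempty E] (p : (E → O) → ℝ) (hp : ∀ φ, 0 ≤ p φ)
    (f : Finset E → (E → O) → ℝ)
    (hmono : AdaptiveMonotone p f) (hsub : AdaptiveSubmodular p f)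
    (π πstar : Policy E O) (r i : ℕ) :
    favg p f πstar r - favg p f π i ≤
      (r : ℝ) * ∑ φ : E → O, p φ * maxMarginal p f (runP π φ i) := by
  have h := calc
    favg p f πstar r ≤ favgConcat p f πstar r π i := favg_le_favgConcat πstar π r hp hmono i
    _ = favgConcat p f π i πstar r := favgConcat_comm πstar π r i
    _ ≤ favg p f π i + r * ∑ φ, p φ * maxMarginal p f (runP π φ i) :=
      favgConcat_le π πstar i hp hmono hsub r
  linarith

/-- (Lemma 3) For an adaptive monotone, adaptive submodular `f`, any deterministic adaptive
policy `π`, any deterministic policy `π*` selecting at most `r` items, and `0 ≤ i ≤ r`: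
`f_avg(π*) − f_avg(π_i) ≤ r · E_Φ[max_e Δ(e | Ψ_i(π, Φ))]`. -/
theorem opt_minus_favg_le {E O : Type*} [Fintype E] [Fintype O] [DecidableEq E]
    [Nonempty E] (p : (E → O) → ℝ) (hp : ∀ φ, 0 ≤ p φ) (hp1 : ∑ φ : E → O, p φ = 1)
    (f : Finset E → (E → O) → ℝ) (hf : ∀ S φ, 0 ≤ f S φ)
    (hmono : AdaptiveMonotone p f) (hsub : AdaptiveSubmodular p f)
    (π πstar : Policy E O) (r i : ℕ) (hi : i ≤ r) :
    favg p f πstar r - favg p f π i ≤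
      (r : ℝ) * ∑ φ : E → O, p φ * maxMarginal p f (runP π φ i) :=
  opt_minus_favg_le_general p hp f hmono hsub π πstar r i
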